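/- arXiv:2212.12167 — 2 statements merged into one kernel-verified Lean document; each statement's English description precedes it below -/
import Mathlib

section
/- Combined residual-IV identity (used at the start of the proof of Lemma 4): under the treatment model, IV independence, and the orthogonality conditions Cov(ϑ_a(V), α_z(V)) = 0, Cov(ϑ_a(V), α_u(V)) = 0, Cov(ϑ_z(V), α_z(V)) = 0, Cov(ϑ_z(V), α_u(V)) = 0, and Cov(α_z(V), ϑ_u(V)) = 0, it holds that E[(B − E[B])·(A − E[A|B])·(A·ϑ_a(V) + ϑ_z(V)·B + ϑ_u(V))] = E[(B − E[B])·(A − E[A|B])·A]·E[ϑ_a(V)]. -/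
open MeasureTheory ProbabilityTheory

/-- Covariance of two real random variables: `Cov(X,Z) = E[XZ] - E[X]·E[Z]`. -/
noncomputable def covE {Ω : Type*} [MeasurableSpace Ω] (μ : Measure Ω) (X Z : Ω → ℝ) : ℝ :=
  (∫ ω, X ω * Z ω ∂μ) - (∫ ω, X ω ∂μ) * (∫ ω, Z ω ∂μ)

/-!
Write `m(x) = E[αz(V)]·x + E[αu(V)]`. Since `A² = A`, the integrand on the left is
`A·G(B,V) − H(B,V)` for explicit `G, H`, and by the tower property `A` may be replaced by
`E[A | B, V] = αz(V)·B + αu(V)`; since `B` and `V` are independent, `E[A | B] = m(B)`.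
Independence also lets one integrate out `V` with `B = x` frozen, and the orthogonality conditions
turn the result into `(x − E B)·((1 − m(x))·m(x)·E ϑa(V) + Cov(αu(V), ϑu(V)))`. Averaging over
`B` kills the constant covariance term and leaves `E[(B − E B)(1 − m(B))·m(B)]·E ϑa(V)`; the
same computation identifies the right-hand side with this quantity.
-/

-- With these rules `fun_prop` proves the integrability of every bounded integrand below.
attribute [fun_prop] MemLp

section EssentiallyBounded

variable {Ω 𝒱 : Type*} [MeasurableSpace Ω] [MeasurableSpace 𝒱] {μ : Measure Ω} {f g : Ω → ℝ}

@[fun_prop]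
lemma memLp_fun_add {p} (hf : MemLp f p μ) (hg : MemLp g p μ) :
    MemLp (fun ω => f ω + g ω) p μ :=
  hf.add hg

@[fun_prop]
lemma memLp_fun_sub {p} (hf : MemLp f p μ) (hg : MemLp g p μ) :
    MemLp (fun ω => f ω - g ω) p μ :=
  hf.sub hg

@[fun_prop]
lemma memLp_top_fun_mul (hf : MemLp f ⊤ μ) (hg : MemLp g ⊤ μ) :
    MemLp (fun ω => f ω * g ω) ⊤ μ :=
  hg.mul hf

@[fun_prop]
lemma memLp_top_fun_const (c : ℝ) : MemLp (fun _ : Ω => c) ⊤ μ :=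
  memLp_top_const c

@[fun_prop]
lemma memLp_fun_comp_of_map {p} {h : 𝒱 → ℝ} {V : Ω → 𝒱} (hh : MemLp h p (μ.map V))
    (hV : Measurable V) : MemLp (fun ω => h (V ω)) p μ :=
  hh.comp_of_map hV.aemeasurable

@[fun_prop]
lemma integrable_fun_comp_of_map {h : 𝒱 → ℝ} {V : Ω → 𝒱} (hh : Integrable h (μ.map V))
    (hV : Measurable V) : Integrable (fun ω => h (V ω)) μ :=
  hh.comp_measurable hV

@[fun_prop]
lemma integrable_fun_mul_of_memLp_top (hf : Integrable f μ) (hg : MemLp g ⊤ μ) :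
    Integrable (fun ω => f ω * g ω) μ :=
  hf.mul_of_top_left hg

@[fun_prop]
lemma integrable_of_memLp_top [IsFiniteMeasure μ] (hf : MemLp f ⊤ μ) : Integrable f μ :=
  hf.integrable le_top

lemma memLp_top_of_abs_le (hf : Measurable f) (hb : ∃ C, ∀ ω, |f ω| ≤ C) : MemLp f ⊤ μ := by
  obtain ⟨C, hC⟩ := hb
  exact memLp_top_of_bound hf.aestronglyMeasurable C (.of_forall hC)

lemma memLp_top_of_zero_or_one (hf : Measurable f) (h01 : ∀ ω, f ω = 0 ∨ f ω = 1) :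
    MemLp f ⊤ μ :=
  memLp_top_of_abs_le hf ⟨1, fun ω => by rcases h01 ω with h | h <;> simp [h]⟩

end EssentiallyBounded

section

variable {Ω β : Type*} [MeasurableSpace Ω] [MeasurableSpace β] {μ : Measure Ω}

lemma integral_mul_comp_eq_of_condExp_comap_ae_eq [IsFiniteMeasure μ] {X Z : Ω → ℝ} {Y : Ω → β}
    (hY : Measurable Y) (hXZ : μ[X | MeasurableSpace.comap Y inferInstance] =ᵐ[μ] Z)
    (hX : Integrable X μ) {g : β → ℝ} (hg : Measurable g) (hgY : MemLp (fun ω => g (Y ω)) ⊤ μ) :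
    ∫ ω, X ω * g (Y ω) ∂μ = ∫ ω, Z ω * g (Y ω) ∂μ := by
  have hgY_meas : StronglyMeasurable[MeasurableSpace.comap Y inferInstance] fun ω => g (Y ω) :=
    (hg.comp (comap_measurable Y)).stronglyMeasurable
  calc ∫ ω, X ω * g (Y ω) ∂μ
      = ∫ ω, μ[X * fun ω => g (Y ω) | MeasurableSpace.comap Y inferInstance] ω ∂μ :=
        (integral_condExp hY.comap_le).symm
    _ = ∫ ω, Z ω * g (Y ω) ∂μ := by
        refine integral_congr_ae ?_
        filter_upwards [condExp_mul_of_stronglyMeasurable_right hgY_meas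
          (integrable_fun_mul_of_memLp_top hX hgY) hX, hXZ] with ω hpull hω
        rw [hpull, Pi.mul_apply, hω]

end

section

variable {Ω α β : Type*} [MeasurableSpace Ω] [MeasurableSpace α] [MeasurableSpace β]
  {μ : Measure Ω} [IsFiniteMeasure μ]

lemma ProbabilityTheory.IndepFun.integral_comp_eq_integral_integral {X : Ω → α} {Y : Ω → β}
    (hXY : IndepFun X Y μ) (hX : Measurable X) (hY : Measurable Y) {F : α → β → ℝ}
    (hF : Measurable (Function.uncurry F)) (hFXY : Integrable (fun ω => F (X ω) (Y ω)) μ) :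
    ∫ ω, F (X ω) (Y ω) ∂μ = ∫ ω, ∫ ω', F (X ω) (Y ω') ∂μ ∂μ := by
  have hmap := (indepFun_iff_map_prod_eq_prod_map_map hX.aemeasurable hY.aemeasurable).mp hXY
  have hFi : Integrable (Function.uncurry F) ((μ.map X).prod (μ.map Y)) := by
    rw [← hmap, integrable_map_measure hF.aestronglyMeasurable (hX.prodMk hY).aemeasurable]
    exact hFXY
  calc ∫ ω, F (X ω) (Y ω) ∂μ
      = ∫ p, Function.uncurry F p ∂(μ.map X).prod (μ.map Y) := by
        rw [← hmap, integral_map (hX.prodMk hY).aemeasurable hF.aestronglyMeasurable]; rfl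
    _ = ∫ x, ∫ y, F x y ∂μ.map Y ∂μ.map X := integral_prod _ hFi
    _ = ∫ x, ∫ ω', F x (Y ω') ∂μ ∂μ.map X := by
        congr with x
        exact integral_map hY.aemeasurable (hF.comp measurable_prodMk_left).aestronglyMeasurable
    _ = ∫ ω, ∫ ω', F (X ω) (Y ω') ∂μ ∂μ := by
        refine integral_map hX.aemeasurable ?_
        exact (hF.comp (measurable_fst.prodMk (hY.comp measurable_snd))).stronglyMeasurable
          |>.integral_prod_right'.aestronglyMeasurable

end

section

variable {Ω 𝒱 : Type*} [MeasurableSpace Ω] [MeasurableSpace 𝒱] {μ : Measure Ω}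
  [IsFiniteMeasure μ] {V : Ω → 𝒱} {A B : Ω → ℝ}

lemma condExp_comap_comp_eq_integral_of_indepFun (hV : Measurable V) (hB : Measurable B)
    (hindep : IndepFun B V μ) {h : 𝒱 → ℝ} (hh : Measurable h) :
    μ[fun ω => h (V ω) | MeasurableSpace.comap B inferInstance] =ᵐ[μ]
      fun _ => ∫ ω, h (V ω) ∂μ :=
  condExp_indep_eq hV.comap_le hB.comap_le (hh.comp (comap_measurable V)).stronglyMeasurable
    ((IndepFun_iff_Indep V B μ).mp hindep.symm)

lemma condExp_comap_eq_of_condExp_comap_prodMk (hV : Measurable V) (hB : Measurable B)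
    (hBb : MemLp B ⊤ μ) (hindep : IndepFun B V μ) {αz αu : 𝒱 → ℝ}
    (hαz : Measurable αz) (hαu : Measurable αu)
    (hαzb : MemLp αz ⊤ (μ.map V)) (hαub : MemLp αu ⊤ (μ.map V))
    (htreat : μ[A | MeasurableSpace.comap (fun ω => (B ω, V ω)) inferInstance]
        =ᵐ[μ] fun ω => αz (V ω) * B ω + αu (V ω)) :
    μ[A | MeasurableSpace.comap B inferInstance] =ᵐ[μ]
      fun ω => (∫ ω', αz (V ω') ∂μ) * B ω + ∫ ω', αu (V ω') ∂μ := by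
  have hle : MeasurableSpace.comap B inferInstance
      ≤ MeasurableSpace.comap (fun ω => (B ω, V ω)) inferInstance :=
    (measurable_fst.comp (comap_measurable (fun ω => (B ω, V ω)))).comap_le
  have hpull : μ[(fun ω => αz (V ω)) * B | MeasurableSpace.comap B inferInstance] =ᵐ[μ]
      μ[fun ω => αz (V ω) | MeasurableSpace.comap B inferInstance] * B :=
    condExp_mul_of_stronglyMeasurable_right (comap_measurable B).stronglyMeasurable
      (integrable_fun_mul_of_memLp_top (by fun_prop) hBb) (by fun_prop)
  calc μ[A | MeasurableSpace.comap B inferInstance]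
      =ᵐ[μ] μ[μ[A | MeasurableSpace.comap (fun ω => (B ω, V ω)) inferInstance]
          | MeasurableSpace.comap B inferInstance] :=
        (condExp_condExp_of_le hle (hB.prodMk hV).comap_le).symm
    _ =ᵐ[μ] μ[(fun ω => αz (V ω)) * B + fun ω => αu (V ω)
          | MeasurableSpace.comap B inferInstance] := condExp_congr_ae htreat
    _ =ᵐ[μ] _ := by
        filter_upwards [condExp_add (f := (fun ω => αz (V ω)) * B)
          (integrable_fun_mul_of_memLp_top (by fun_prop) hBb)
          (by fun_prop : Integrable (fun ω => αu (V ω)) μ) _, hpull,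
          condExp_comap_comp_eq_integral_of_indepFun hV hB hindep hαz,
          condExp_comap_comp_eq_integral_of_indepFun hV hB hindep hαu] with ω hadd hmul hz hu
        rw [hadd, Pi.add_apply, hmul, Pi.mul_apply, hz, hu]

end

lemma covE_comm {Ω : Type*} [MeasurableSpace Ω] (μ : Measure Ω) (X Z : Ω → ℝ) :
    covE μ X Z = covE μ Z X := by
  simp only [covE, mul_comm]

section

variable {Ω : Type*} [MeasurableSpace Ω] {μ : Measure Ω} [IsFiniteMeasure μ]
  {Pz Pu Ta Tz Tu : Ω → ℝ} {cz cu : ℝ}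

/-- `x * Pz + Pu` is the treatment propensity at instrument value `x` and `cz * x + cu` its mean:
the integrand is that of the main identity with `B = x` frozen, divided by `x - E B`. -/
lemma integral_frozen_residual_mul_outcome (hPz : MemLp Pz ⊤ μ) (hPu : MemLp Pu ⊤ μ)
    (hTa : MemLp Ta ⊤ μ) (hTz : MemLp Tz ⊤ μ) (hTu : MemLp Tu ⊤ μ)
    (hcz : ∫ ω, Pz ω ∂μ = cz) (hcu : ∫ ω, Pu ω ∂μ = cu)
    (h1 : covE μ Pz Ta = 0) (h2 : covE μ Pu Ta = 0) (h3 : covE μ Pz Tz = 0)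
    (h4 : covE μ Pu Tz = 0) (h5 : covE μ Pz Tu = 0) (x : ℝ) :
    ∫ ω, ((1 - (cz * x + cu)) * ((x * Pz ω + Pu ω) * Ta ω)
        + (x * Pz ω + Pu ω - (cz * x + cu)) * (x * Tz ω + Tu ω)) ∂μ
      = (1 - (cz * x + cu)) * (cz * x + cu) * ∫ ω, Ta ω ∂μ + covE μ Pu Tu := by
  simp only [covE, hcz, hcu] at h1 h2 h3 h4 h5 ⊢
  simp (disch := fun_prop) only [mul_add, add_mul, mul_sub, sub_mul, mul_assoc, mul_left_comm _ x,
    integral_add, integral_sub, integral_const_mul]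
  linear_combination (1 - (cz * x + cu)) * (x * h1 + h2) + x * x * h3 + x * h4 + x * h5

end

section

variable {Ω 𝒱 : Type*} [MeasurableSpace Ω] [MeasurableSpace 𝒱] {μ : Measure Ω}
  [IsFiniteMeasure μ] {V : Ω → 𝒱} {A B : Ω → ℝ} {b cz cu : ℝ}

lemma integral_residual_mul_treatment (hB : Measurable B) (hBb : MemLp B ⊤ μ) (hAb : MemLp A ⊤ μ)
    (hA01 : ∀ ω, A ω = 0 ∨ A ω = 1)
    (hm : μ[A | MeasurableSpace.comap B inferInstance] =ᵐ[μ] fun ω => cz * B ω + cu) :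
    ∫ ω, (B ω - b) * (A ω - μ[A | MeasurableSpace.comap B inferInstance] ω) * A ω ∂μ
      = ∫ ω, (B ω - b) * ((1 - (cz * B ω + cu)) * (cz * B ω + cu)) ∂μ := by
  calc ∫ ω, (B ω - b) * (A ω - μ[A | MeasurableSpace.comap B inferInstance] ω) * A ω ∂μ
      = ∫ ω, A ω * ((B ω - b) * (1 - (cz * B ω + cu))) ∂μ := by
        refine integral_congr_ae ?_
        filter_upwards [hm] with ω hω
        rw [hω]
        rcases hA01 ω with h | h <;> rw [h] <;> ring
    _ = ∫ ω, (cz * B ω + cu) * ((B ω - b) * (1 - (cz * B ω + cu))) ∂μ :=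
        integral_mul_comp_eq_of_condExp_comap_ae_eq hB hm (by fun_prop)
          (g := fun x => (x - b) * (1 - (cz * x + cu))) (by fun_prop) (by fun_prop)
    _ = _ := integral_congr_ae (.of_forall fun ω => by ring)

lemma integral_residual_mul_outcome (hV : Measurable V) (hB : Measurable B) (hBb : MemLp B ⊤ μ)
    (hAb : MemLp A ⊤ μ) (hA01 : ∀ ω, A ω = 0 ∨ A ω = 1) (hindep : IndepFun B V μ)
    {αz αu ϑa ϑz ϑu : 𝒱 → ℝ} (hαz : Measurable αz) (hαu : Measurable αu)
    (hϑa : Measurable ϑa) (hϑz : Measurable ϑz) (hϑu : Measurable ϑu)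
    (hαzb : MemLp αz ⊤ (μ.map V)) (hαub : MemLp αu ⊤ (μ.map V)) (hϑab : MemLp ϑa ⊤ (μ.map V))
    (hϑzb : MemLp ϑz ⊤ (μ.map V)) (hϑub : MemLp ϑu ⊤ (μ.map V))
    (htreat : μ[A | MeasurableSpace.comap (fun ω => (B ω, V ω)) inferInstance]
        =ᵐ[μ] fun ω => αz (V ω) * B ω + αu (V ω))
    (hm : μ[A | MeasurableSpace.comap B inferInstance] =ᵐ[μ] fun ω => cz * B ω + cu)
    (hcz : ∫ ω, αz (V ω) ∂μ = cz) (hcu : ∫ ω, αu (V ω) ∂μ = cu)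
    (h1 : covE μ (fun ω => αz (V ω)) (fun ω => ϑa (V ω)) = 0)
    (h2 : covE μ (fun ω => αu (V ω)) (fun ω => ϑa (V ω)) = 0)
    (h3 : covE μ (fun ω => αz (V ω)) (fun ω => ϑz (V ω)) = 0)
    (h4 : covE μ (fun ω => αu (V ω)) (fun ω => ϑz (V ω)) = 0)
    (h5 : covE μ (fun ω => αz (V ω)) (fun ω => ϑu (V ω)) = 0) :
    ∫ ω, (B ω - b) * (A ω - μ[A | MeasurableSpace.comap B inferInstance] ω)
        * (A ω * ϑa (V ω) + ϑz (V ω) * B ω + ϑu (V ω)) ∂μ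
      = ∫ ω, (B ω - b) * ((1 - (cz * B ω + cu)) * (cz * B ω + cu) * ∫ ω', ϑa (V ω') ∂μ
          + covE μ (fun ω => αu (V ω)) (fun ω => ϑu (V ω))) ∂μ := by
  set G : ℝ × 𝒱 → ℝ := fun q =>
    (q.1 - b) * ((1 - (cz * q.1 + cu)) * ϑa q.2 + (ϑz q.2 * q.1 + ϑu q.2))
  set H : Ω → ℝ := fun ω => (B ω - b) * ((cz * B ω + cu) * (ϑz (V ω) * B ω + ϑu (V ω)))
  set F : ℝ → 𝒱 → ℝ := fun x v => (x - b) * ((1 - (cz * x + cu)) * ((x * αz v + αu v) * ϑa v)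
    + (x * αz v + αu v - (cz * x + cu)) * (x * ϑz v + ϑu v))
  have hGBV : MemLp (fun ω => G (B ω, V ω)) ⊤ μ := by simp only [G]; fun_prop
  have hH : Integrable H μ := by simp only [H]; fun_prop
  calc _ = ∫ ω, (A ω * G (B ω, V ω) - H ω) ∂μ := by
        refine integral_congr_ae ?_
        filter_upwards [hm] with ω hω
        rw [hω]
        rcases hA01 ω with h | h <;> simp only [G, H, h] <;> ring
    _ = ∫ ω, A ω * G (B ω, V ω) ∂μ - ∫ ω, H ω ∂μ :=
        integral_sub (integrable_fun_mul_of_memLp_top (by fun_prop) hGBV) hH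
    _ = ∫ ω, (αz (V ω) * B ω + αu (V ω)) * G (B ω, V ω) ∂μ - ∫ ω, H ω ∂μ := by
        rw [integral_mul_comp_eq_of_condExp_comap_ae_eq (hB.prodMk hV) htreat (by fun_prop)
          (by simp only [G]; fun_prop) hGBV]
    _ = ∫ ω, F (B ω) (V ω) ∂μ := by
        rw [← integral_sub (integrable_fun_mul_of_memLp_top (by fun_prop) hGBV) hH]
        exact integral_congr_ae (.of_forall fun ω => by simp only [G, H, F]; ring)
    _ = ∫ ω, ∫ ω', F (B ω) (V ω') ∂μ ∂μ :=
        hindep.integral_comp_eq_integral_integral hB hV (by simp only [F]; fun_prop)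
          (by simp only [F]; fun_prop)
    _ = _ := by
        congr with ω
        simp only [F]
        rw [integral_const_mul, integral_frozen_residual_mul_outcome (by fun_prop) (by fun_prop)
          (by fun_prop) (by fun_prop) (by fun_prop) hcz hcu h1 h2 h3 h4 h5]

end

lemma integral_sub_integral_mul_add_const {Ω : Type*} [MeasurableSpace Ω] {μ : Measure Ω}
    [IsProbabilityMeasure μ] {X f : Ω → ℝ} (hX : MemLp X ⊤ μ) (hf : MemLp f ⊤ μ) (t κ : ℝ) :
    ∫ ω, (X ω - ∫ ω', X ω' ∂μ) * (f ω * t + κ) ∂μ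
      = (∫ ω, (X ω - ∫ ω', X ω' ∂μ) * f ω ∂μ) * t := by
  have hcentered : ∫ ω, (X ω - ∫ ω', X ω' ∂μ) ∂μ = 0 := by
    rw [integral_sub (by fun_prop) (by fun_prop), integral_const]; simp
  calc ∫ ω, (X ω - ∫ ω', X ω' ∂μ) * (f ω * t + κ) ∂μ
      = ∫ ω, ((X ω - ∫ ω', X ω' ∂μ) * f ω * t + κ * (X ω - ∫ ω', X ω' ∂μ)) ∂μ :=
        integral_congr_ae (.of_forall fun ω => by ring)
    _ = (∫ ω, (X ω - ∫ ω', X ω' ∂μ) * f ω ∂μ) * t + κ * ∫ ω, (X ω - ∫ ω', X ω' ∂μ) ∂μ := by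
        rw [integral_add (by fun_prop) (by fun_prop), integral_mul_const, integral_const_mul]
    _ = _ := by rw [hcentered, mul_zero, add_zero]

/-- Combined residual-IV identity (used at the start of the proof of Lemma 4):
`E[(B − E[B])·(A − E[A|B])·(A·ϑ_a(V) + ϑ_z(V)·B + ϑ_u(V))]
  = E[(B − E[B])·(A − E[A|B])·A]·E[ϑ_a(V)]`. -/
theorem combined_residual_iv_identity
    {Ω 𝒱 : Type*} [MeasurableSpace Ω] [MeasurableSpace 𝒱]
    (μ : Measure Ω) [IsProbabilityMeasure μ]
    (V : Ω → 𝒱) (A B : Ω → ℝ)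
    (hV : Measurable V) (hA : Measurable A) (hB : Measurable B)
    (hA01 : ∀ ω, A ω = 0 ∨ A ω = 1) (hB01 : ∀ ω, B ω = 0 ∨ B ω = 1)
    (αz αu : 𝒱 → ℝ) (hαzm : Measurable αz) (hαum : Measurable αu)
    (hαzb : ∃ C, ∀ x, |αz x| ≤ C) (hαub : ∃ C, ∀ x, |αu x| ≤ C)
    (htreat : μ[A | MeasurableSpace.comap (fun ω => (B ω, V ω)) inferInstance]
        =ᵐ[μ] fun ω => αz (V ω) * B ω + αu (V ω))
    (hindep : IndepFun B V μ)
    (ϑa ϑz ϑu : 𝒱 → ℝ)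
    (hϑam : Measurable ϑa) (hϑzm : Measurable ϑz) (hϑum : Measurable ϑu)
    (hϑab : ∃ C, ∀ x, |ϑa x| ≤ C) (hϑzb : ∃ C, ∀ x, |ϑz x| ≤ C)
    (hϑub : ∃ C, ∀ x, |ϑu x| ≤ C)
    (horth1 : covE μ (fun x => ϑa (V x)) (fun x => αz (V x)) = 0)
    (horth2 : covE μ (fun x => ϑa (V x)) (fun x => αu (V x)) = 0)
    (horth3 : covE μ (fun x => ϑz (V x)) (fun x => αz (V x)) = 0)
    (horth4 : covE μ (fun x => ϑz (V x)) (fun x => αu (V x)) = 0)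
    (horth5 : covE μ (fun x => αz (V x)) (fun x => ϑu (V x)) = 0) :
    (∫ ω, (B ω - ∫ x, B x ∂μ)
        * (A ω - (μ[A | MeasurableSpace.comap B inferInstance]) ω)
        * (A ω * ϑa (V ω) + ϑz (V ω) * B ω + ϑu (V ω)) ∂μ)
      = (∫ ω, (B ω - ∫ x, B x ∂μ)
          * (A ω - (μ[A | MeasurableSpace.comap B inferInstance]) ω) * A ω ∂μ)
        * (∫ ω, ϑa (V ω) ∂μ) := by
  have hAb : MemLp A ⊤ μ := memLp_top_of_zero_or_one hA hA01
  have hBb : MemLp B ⊤ μ := memLp_top_of_zero_or_one hB hB01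
  have hαzb' := memLp_top_of_abs_le (μ := μ.map V) hαzm hαzb
  have hαub' := memLp_top_of_abs_le (μ := μ.map V) hαum hαub
  have hm := condExp_comap_eq_of_condExp_comap_prodMk hV hB hBb hindep hαzm hαum hαzb' hαub'
    htreat
  rw [integral_residual_mul_outcome hV hB hBb hAb hA01 hindep hαzm hαum hϑam hϑzm hϑum hαzb'
      hαub' (memLp_top_of_abs_le hϑam hϑab) (memLp_top_of_abs_le hϑzm hϑzb)
      (memLp_top_of_abs_le hϑum hϑub) htreat hm rfl rfl ((covE_comm _ _ _).trans horth1)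
      ((covE_comm _ _ _).trans horth2) ((covE_comm _ _ _).trans horth3)
      ((covE_comm _ _ _).trans horth4) horth5,
    integral_residual_mul_treatment hB hBb hAb hA01 hm,
    integral_sub_integral_mul_add_const hBb (by fun_prop)]
end

section
/- Lemma 5 (second identification equation): under the outcome model, the treatment model, IV independence, and the orthogonality conditions (Assumption 2(c), unconditional form), it holds that E[(B − E[B])·Y] = E[A·(B − E[B])]·E[ϑ_a(V)] + E[B·(B − E[B])]·E[ϑ_z(V)] + E[A·B·(B − E[B])]·E[ϑ_az(V)]. -/
open MeasureTheory ProbabilityTheory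

open scoped ENNReal

/-!
Conditioning on `(V, A, B)` replaces `Y` by its regression on `(V, A, B)`, and conditioning on
`(B, V)` then replaces `A` by `αz(V) B + αu(V)`. Because `B² = B`, every resulting moment has the
form `E[(B - E B)(p(V) + B q(V))]`, which independence of `B` and `V` evaluates to
`Var(B) · E[q(V)]`; the orthogonality conditions finally split `E[ϑ(V) α(V)]` into
`E[ϑ(V)] E[α(V)]`.
-/

theorem integral_mul_eq_mul_integral_of_covE_eq_zero {Ω : Type*} [MeasurableSpace Ω]
    {μ : Measure Ω} {X Z : Ω → ℝ} (h : covE μ X Z = 0) :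
    ∫ ω, X ω * Z ω ∂μ = (∫ ω, X ω ∂μ) * ∫ ω, Z ω ∂μ :=
  sub_eq_zero.mp h

theorem integral_mul_eq_integral_mul_of_condExp_eq {Ω : Type*} {m m₀ : MeasurableSpace Ω}
    {μ : Measure[m₀] Ω} [IsFiniteMeasure μ] (hm : m ≤ m₀)
    {f g h : Ω → ℝ} (hf : StronglyMeasurable[m] f) (hfg : Integrable (f * g) μ)
    (hg : Integrable g μ) (hgh : μ[g|m] =ᵐ[μ] h) :
    ∫ ω, f ω * g ω ∂μ = ∫ ω, f ω * h ω ∂μ :=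
  calc ∫ ω, f ω * g ω ∂μ = ∫ ω, μ[f * g|m] ω ∂μ := (integral_condExp hm).symm
    _ = ∫ ω, f ω * h ω ∂μ := integral_congr_ae <|
        (condExp_mul_of_stronglyMeasurable_left hf hfg hg).trans (.mul .rfl hgh)

section Instrument

variable {Ω 𝒱 : Type*} [MeasurableSpace Ω] [MeasurableSpace 𝒱] {μ : Measure Ω}
  {V : Ω → 𝒱} {A B : Ω → ℝ}

theorem memLp_top_of_forall_eq_zero_or_eq_one (hB : AEStronglyMeasurable B μ)
    (hB01 : ∀ ω, B ω = 0 ∨ B ω = 1) : MemLp B ∞ μ :=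
  memLp_top_of_bound hB 1 <| .of_forall fun ω => by rcases hB01 ω with h | h <;> simp [h]

theorem Measurable.memLp_top_comp_of_abs_le {f : 𝒱 → ℝ} (hf : Measurable f)
    (hfb : ∃ C, ∀ x, |f x| ≤ C) (hV : Measurable V) : MemLp (fun ω => f (V ω)) ∞ μ :=
  let ⟨C, hC⟩ := hfb
  memLp_top_of_bound (hf.comp hV).aestronglyMeasurable C (.of_forall fun ω => hC (V ω))

variable [IsProbabilityMeasure μ]

theorem ProbabilityTheory.IndepFun.integral_centered_mul_affine (hBV : IndepFun B V μ)
    (hB : MemLp B 2 μ) {p q : 𝒱 → ℝ} (hp : Measurable p) (hq : Measurable q)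
    (hpV : Integrable (fun ω => p (V ω)) μ) (hqV : Integrable (fun ω => q (V ω)) μ) :
    ∫ ω, (B ω - ∫ x, B x ∂μ) * (p (V ω) + B ω * q (V ω)) ∂μ
      = (∫ ω, B ω * (B ω - ∫ x, B x ∂μ) ∂μ) * ∫ ω, q (V ω) ∂μ := by
  set b := ∫ x, B x ∂μ
  have hD : Integrable (fun ω => B ω - b) μ := (hB.integrable one_le_two).sub (integrable_const b)
  have hBD : Integrable (fun ω => B ω * (B ω - b)) μ := hB.integrable_mul (hB.sub (memLp_const b))
  have hD_indep : IndepFun (fun ω => B ω - b) (fun ω => p (V ω)) μ :=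
    hBV.comp (measurable_id.sub_const b) hp
  have hBD_indep : IndepFun (fun ω => B ω * (B ω - b)) (fun ω => q (V ω)) μ :=
    hBV.comp (measurable_id.mul (measurable_id.sub_const b)) hq
  have hDp : Integrable (fun ω => (B ω - b) * p (V ω)) μ := hD_indep.integrable_mul hD hpV
  have hBDq : Integrable (fun ω => B ω * (B ω - b) * q (V ω)) μ :=
    hBD_indep.integrable_mul hBD hqV
  have hD_mean : ∫ ω, B ω - b ∂μ = 0 := by
    rw [integral_sub (hB.integrable one_le_two) (integrable_const b)]; simp [b]
  calc ∫ ω, (B ω - b) * (p (V ω) + B ω * q (V ω)) ∂μ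
        = ∫ ω, (B ω - b) * p (V ω) + B ω * (B ω - b) * q (V ω) ∂μ :=
          integral_congr_ae <| .of_forall fun ω => by ring
      _ = (∫ ω, B ω - b ∂μ) * (∫ ω, p (V ω) ∂μ)
            + (∫ ω, B ω * (B ω - b) ∂μ) * ∫ ω, q (V ω) ∂μ := by
          rw [integral_add hDp hBDq,
            hD_indep.integral_fun_mul_eq_mul_integral hD.1 hpV.1,
            hBD_indep.integral_fun_mul_eq_mul_integral hBD.1 hqV.1]
      _ = (∫ ω, B ω * (B ω - b) ∂μ) * ∫ ω, q (V ω) ∂μ := by rw [hD_mean, zero_mul, zero_add]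

theorem integral_centered_mul_eq_add_of_condExp_eq (hV : Measurable V) (hA : Measurable A)
    (hB : Measurable B) (hA_top : MemLp A ∞ μ) (hB_top : MemLp B ∞ μ) {Y : Ω → ℝ}
    (hY : Integrable Y μ) {ϑa ϑz ϑaz ϑu : 𝒱 → ℝ} (hϑa : MemLp (fun ω => ϑa (V ω)) ∞ μ)
    (hϑz : MemLp (fun ω => ϑz (V ω)) ∞ μ) (hϑaz : MemLp (fun ω => ϑaz (V ω)) ∞ μ)
    (hϑu : MemLp (fun ω => ϑu (V ω)) ∞ μ)
    (houtcome : μ[Y | MeasurableSpace.comap (fun ω => (V ω, A ω, B ω)) inferInstance]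
        =ᵐ[μ] fun ω => ϑa (V ω) * A ω + ϑz (V ω) * B ω + ϑaz (V ω) * A ω * B ω + ϑu (V ω)) :
    ∫ ω, (B ω - ∫ x, B x ∂μ) * Y ω ∂μ
      = ∫ ω, (B ω - ∫ x, B x ∂μ) * (ϑa (V ω) + B ω * ϑaz (V ω)) * A ω ∂μ
        + ∫ ω, (B ω - ∫ x, B x ∂μ) * (ϑu (V ω) + B ω * ϑz (V ω)) ∂μ := by
  set b := ∫ x, B x ∂μ
  have hD_top : MemLp (fun ω => B ω - b) ∞ μ := hB_top.sub (memLp_top_const b)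
  have hD : StronglyMeasurable[MeasurableSpace.comap (fun ω => (V ω, A ω, B ω)) inferInstance]
      fun ω => B ω - b :=
    (((measurable_snd.comp measurable_snd).sub_const b).comp
      (comap_measurable _)).stronglyMeasurable
  have hϑaA : Integrable (fun ω => (B ω - b) * (ϑa (V ω) + B ω * ϑaz (V ω)) * A ω) μ :=
    (hA_top.integrable le_top).mul_of_top_right ((hϑa.add (hϑaz.mul' hB_top)).mul' hD_top)
  have hϑzu : Integrable (fun ω => (B ω - b) * (ϑu (V ω) + B ω * ϑz (V ω))) μ :=
    ((hϑu.add (hϑz.mul' hB_top)).mul' hD_top).integrable le_top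
  rw [integral_mul_eq_integral_mul_of_condExp_eq (hV.prodMk (hA.prodMk hB)).comap_le hD
    (hY.mul_of_top_right hD_top) hY houtcome, ← integral_add hϑaA hϑzu]
  exact integral_congr_ae <| .of_forall fun ω => by ring

variable (μ V A B) in
structure IsLinearTreatmentModel (αz αu : 𝒱 → ℝ) : Prop where
  measurable_V : Measurable V
  measurable_B : Measurable B
  B_eq_zero_or_one : ∀ ω, B ω = 0 ∨ B ω = 1
  indepFun : IndepFun B V μ
  integrable_A : Integrable A μ
  measurable_αz : Measurable αz
  measurable_αu : Measurable αu
  memLp_αz : MemLp (fun ω => αz (V ω)) ∞ μ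
  memLp_αu : MemLp (fun ω => αu (V ω)) ∞ μ
  condExp_A : μ[A | MeasurableSpace.comap (fun ω => (B ω, V ω)) inferInstance]
    =ᵐ[μ] fun ω => αz (V ω) * B ω + αu (V ω)

namespace IsLinearTreatmentModel

variable {αz αu p q : 𝒱 → ℝ}

theorem integral_centered_mul_affine_mul (h : IsLinearTreatmentModel μ V A B αz αu)
    (hp : Measurable p) (hq : Measurable q)
    (hpV : MemLp (fun ω => p (V ω)) ∞ μ) (hqV : MemLp (fun ω => q (V ω)) ∞ μ) :
    ∫ ω, (B ω - ∫ x, B x ∂μ) * (p (V ω) + B ω * q (V ω)) * A ω ∂μ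
      = (∫ ω, B ω * (B ω - ∫ x, B x ∂μ) ∂μ) * ((∫ ω, p (V ω) * αz (V ω) ∂μ)
          + (∫ ω, q (V ω) * αz (V ω) ∂μ) + ∫ ω, q (V ω) * αu (V ω) ∂μ) := by
  set b := ∫ x, B x ∂μ
  have hB_top : MemLp B ∞ μ :=
    memLp_top_of_forall_eq_zero_or_eq_one h.measurable_B.aestronglyMeasurable h.B_eq_zero_or_one
  have hφ_top : MemLp (fun ω => (B ω - b) * (p (V ω) + B ω * q (V ω))) ∞ μ :=
    (hpV.add (hqV.mul' hB_top)).mul' (hB_top.sub (memLp_top_const b))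
  have hφ : StronglyMeasurable[MeasurableSpace.comap (fun ω => (B ω, V ω)) inferInstance]
      fun ω => (B ω - b) * (p (V ω) + B ω * q (V ω)) :=
    (((measurable_fst.sub_const b).mul ((hp.comp measurable_snd).add
      (measurable_fst.mul (hq.comp measurable_snd)))).comp (comap_measurable _)).stronglyMeasurable
  have hpαz : Integrable (fun ω => p (V ω) * αz (V ω)) μ := (h.memLp_αz.mul' hpV).integrable le_top
  have hqαz : Integrable (fun ω => q (V ω) * αz (V ω)) μ := (h.memLp_αz.mul' hqV).integrable le_top
  have hqαu : Integrable (fun ω => q (V ω) * αu (V ω)) μ := (h.memLp_αu.mul' hqV).integrable le_top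
  have hpqαz : Integrable (fun ω => p (V ω) * αz (V ω) + q (V ω) * αz (V ω)) μ := hpαz.add hqαz
  calc _ = ∫ ω, (B ω - b) * (p (V ω) + B ω * q (V ω)) * (αz (V ω) * B ω + αu (V ω)) ∂μ :=
        integral_mul_eq_integral_mul_of_condExp_eq (h.measurable_B.prodMk h.measurable_V).comap_le
          hφ (h.integrable_A.mul_of_top_right hφ_top) h.integrable_A h.condExp_A
    _ = ∫ ω, (B ω - b) * (p (V ω) * αu (V ω)
          + B ω * (p (V ω) * αz (V ω) + q (V ω) * αz (V ω) + q (V ω) * αu (V ω))) ∂μ :=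
        integral_congr_ae <| .of_forall fun ω => by
          rcases h.B_eq_zero_or_one ω with hB | hB <;> simp only [hB] <;> ring
    _ = (∫ ω, B ω * (B ω - b) ∂μ)
          * ∫ ω, p (V ω) * αz (V ω) + q (V ω) * αz (V ω) + q (V ω) * αu (V ω) ∂μ :=
        h.indepFun.integral_centered_mul_affine (hB_top.mono_exponent le_top)
          (hp.mul h.measurable_αu) ((hp.mul h.measurable_αz).add (hq.mul h.measurable_αz)
            |>.add (hq.mul h.measurable_αu))
          ((h.memLp_αu.mul' hpV).integrable le_top) (hpqαz.add hqαu)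
    _ = _ := by rw [integral_add hpqαz hqαu, integral_add hpαz hqαz]

theorem integral_mul_centered (h : IsLinearTreatmentModel μ V A B αz αu) :
    ∫ ω, A ω * (B ω - ∫ x, B x ∂μ) ∂μ
      = (∫ ω, B ω * (B ω - ∫ x, B x ∂μ) ∂μ) * ∫ ω, αz (V ω) ∂μ :=
  calc _ = ∫ ω, (B ω - ∫ x, B x ∂μ) * (1 + B ω * 0) * A ω ∂μ :=
        integral_congr_ae <| .of_forall fun ω => by ring
    _ = (∫ ω, B ω * (B ω - ∫ x, B x ∂μ) ∂μ)
          * ((∫ ω, 1 * αz (V ω) ∂μ) + (∫ ω, 0 * αz (V ω) ∂μ) + ∫ ω, 0 * αu (V ω) ∂μ) :=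
        h.integral_centered_mul_affine_mul (p := fun _ => 1) (q := fun _ => 0)
          measurable_const measurable_const (memLp_top_const 1) (memLp_top_const 0)
    _ = _ := by simp

theorem integral_mul_mul_centered (h : IsLinearTreatmentModel μ V A B αz αu) :
    ∫ ω, A ω * B ω * (B ω - ∫ x, B x ∂μ) ∂μ
      = (∫ ω, B ω * (B ω - ∫ x, B x ∂μ) ∂μ) * ((∫ ω, αz (V ω) ∂μ) + ∫ ω, αu (V ω) ∂μ) :=
  calc _ = ∫ ω, (B ω - ∫ x, B x ∂μ) * (0 + B ω * 1) * A ω ∂μ :=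
        integral_congr_ae <| .of_forall fun ω => by ring
    _ = (∫ ω, B ω * (B ω - ∫ x, B x ∂μ) ∂μ)
          * ((∫ ω, 0 * αz (V ω) ∂μ) + (∫ ω, 1 * αz (V ω) ∂μ) + ∫ ω, 1 * αu (V ω) ∂μ) :=
        h.integral_centered_mul_affine_mul (p := fun _ => 0) (q := fun _ => 1)
          measurable_const measurable_const (memLp_top_const 0) (memLp_top_const 1)
    _ = _ := by simp

end IsLinearTreatmentModel

end Instrument

theorem lemma5_second_identification_equation_general
    {Ω 𝒱 : Type*} [MeasurableSpace Ω] [MeasurableSpace 𝒱]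
    (μ : Measure Ω) [IsProbabilityMeasure μ]
    (V : Ω → 𝒱) (A B : Ω → ℝ)
    (hV : Measurable V) (hA : Measurable A) (hB : Measurable B)
    (hA01 : ∀ ω, A ω = 0 ∨ A ω = 1) (hB01 : ∀ ω, B ω = 0 ∨ B ω = 1)
    (αz αu : 𝒱 → ℝ) (hαzm : Measurable αz) (hαum : Measurable αu)
    (hαzb : ∃ C, ∀ x, |αz x| ≤ C) (hαub : ∃ C, ∀ x, |αu x| ≤ C)
    (htreat : μ[A | MeasurableSpace.comap (fun ω => (B ω, V ω)) inferInstance]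
        =ᵐ[μ] fun ω => αz (V ω) * B ω + αu (V ω))
    (hindep : IndepFun B V μ)
    (Y : Ω → ℝ) (hY : Integrable Y μ)
    (ϑa ϑz ϑaz ϑu : 𝒱 → ℝ)
    (hϑam : Measurable ϑa) (hϑzm : Measurable ϑz)
    (hϑazm : Measurable ϑaz) (hϑum : Measurable ϑu)
    (hϑab : ∃ C, ∀ x, |ϑa x| ≤ C) (hϑzb : ∃ C, ∀ x, |ϑz x| ≤ C)
    (hϑazb : ∃ C, ∀ x, |ϑaz x| ≤ C) (hϑub : ∃ C, ∀ x, |ϑu x| ≤ C)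
    (houtcome : μ[Y | MeasurableSpace.comap (fun ω => (V ω, A ω, B ω)) inferInstance]
        =ᵐ[μ] fun ω => ϑa (V ω) * A ω + ϑz (V ω) * B ω + ϑaz (V ω) * A ω * B ω + ϑu (V ω))
    (horth1 : covE μ (fun x => ϑa (V x)) (fun x => αz (V x)) = 0)
    (horth5 : covE μ (fun x => ϑaz (V x)) (fun x => αz (V x)) = 0)
    (horth6 : covE μ (fun x => ϑaz (V x)) (fun x => αu (V x)) = 0)
    :
    (∫ ω, (B ω - ∫ x, B x ∂μ) * Y ω ∂μ)
      = (∫ ω, A ω * (B ω - ∫ x, B x ∂μ) ∂μ) * (∫ ω, ϑa (V ω) ∂μ)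
        + (∫ ω, B ω * (B ω - ∫ x, B x ∂μ) ∂μ) * (∫ ω, ϑz (V ω) ∂μ)
        + (∫ ω, A ω * B ω * (B ω - ∫ x, B x ∂μ) ∂μ) * (∫ ω, ϑaz (V ω) ∂μ) := by
  have hA_top : MemLp A ∞ μ := memLp_top_of_forall_eq_zero_or_eq_one hA.aestronglyMeasurable hA01
  have hB_top : MemLp B ∞ μ := memLp_top_of_forall_eq_zero_or_eq_one hB.aestronglyMeasurable hB01
  have hT : IsLinearTreatmentModel μ V A B αz αu :=
    ⟨hV, hB, hB01, hindep, hA_top.integrable le_top, hαzm, hαum,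
      hαzm.memLp_top_comp_of_abs_le hαzb hV, hαum.memLp_top_comp_of_abs_le hαub hV, htreat⟩
  have hϑa := hϑam.memLp_top_comp_of_abs_le (μ := μ) hϑab hV
  have hϑz := hϑzm.memLp_top_comp_of_abs_le (μ := μ) hϑzb hV
  have hϑaz := hϑazm.memLp_top_comp_of_abs_le (μ := μ) hϑazb hV
  have hϑu := hϑum.memLp_top_comp_of_abs_le (μ := μ) hϑub hV
  rw [integral_centered_mul_eq_add_of_condExp_eq hV hA hB hA_top hB_top hY hϑa hϑz hϑaz hϑu
      houtcome,
    hT.integral_centered_mul_affine_mul hϑam hϑazm hϑa hϑaz,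
    hindep.integral_centered_mul_affine (hB_top.mono_exponent le_top) hϑum hϑzm
      (hϑu.integrable le_top) (hϑz.integrable le_top),
    hT.integral_mul_centered, hT.integral_mul_mul_centered,
    integral_mul_eq_mul_integral_of_covE_eq_zero horth1,
    integral_mul_eq_mul_integral_of_covE_eq_zero horth5,
    integral_mul_eq_mul_integral_of_covE_eq_zero horth6]
  ring

/-- Lemma 5 (second identification equation):
`E[(B − E[B])·Y] = E[A·(B − E[B])]·E[ϑ_a(V)] + E[B·(B − E[B])]·E[ϑ_z(V)]
  + E[A·B·(B − E[B])]·E[ϑ_az(V)]`. -/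
theorem lemma5_second_identification_equation
    {Ω 𝒱 : Type*} [MeasurableSpace Ω] [MeasurableSpace 𝒱]
    (μ : Measure Ω) [IsProbabilityMeasure μ]
    (V : Ω → 𝒱) (A B : Ω → ℝ)
    (hV : Measurable V) (hA : Measurable A) (hB : Measurable B)
    (hA01 : ∀ ω, A ω = 0 ∨ A ω = 1) (hB01 : ∀ ω, B ω = 0 ∨ B ω = 1)
    (αz αu : 𝒱 → ℝ) (hαzm : Measurable αz) (hαum : Measurable αu)
    (hαzb : ∃ C, ∀ x, |αz x| ≤ C) (hαub : ∃ C, ∀ x, |αu x| ≤ C)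
    (htreat : μ[A | MeasurableSpace.comap (fun ω => (B ω, V ω)) inferInstance]
        =ᵐ[μ] fun ω => αz (V ω) * B ω + αu (V ω))
    (hindep : IndepFun B V μ)
    (Y : Ω → ℝ) (hY : Integrable Y μ)
    (ϑa ϑz ϑaz ϑu : 𝒱 → ℝ)
    (hϑam : Measurable ϑa) (hϑzm : Measurable ϑz)
    (hϑazm : Measurable ϑaz) (hϑum : Measurable ϑu)
    (hϑab : ∃ C, ∀ x, |ϑa x| ≤ C) (hϑzb : ∃ C, ∀ x, |ϑz x| ≤ C)
    (hϑazb : ∃ C, ∀ x, |ϑaz x| ≤ C) (hϑub : ∃ C, ∀ x, |ϑu x| ≤ C)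
    (houtcome : μ[Y | MeasurableSpace.comap (fun ω => (V ω, A ω, B ω)) inferInstance]
        =ᵐ[μ] fun ω => ϑa (V ω) * A ω + ϑz (V ω) * B ω + ϑaz (V ω) * A ω * B ω + ϑu (V ω))
    (horth1 : covE μ (fun x => ϑa (V x)) (fun x => αz (V x)) = 0)
    (horth2 : covE μ (fun x => ϑa (V x)) (fun x => αu (V x)) = 0)
    (horth3 : covE μ (fun x => ϑz (V x)) (fun x => αz (V x)) = 0)
    (horth4 : covE μ (fun x => ϑz (V x)) (fun x => αu (V x)) = 0)
    (horth5 : covE μ (fun x => ϑaz (V x)) (fun x => αz (V x)) = 0)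
    (horth6 : covE μ (fun x => ϑaz (V x)) (fun x => αu (V x)) = 0)
    (horth7 : covE μ (fun x => αz (V x)) (fun x => ϑu (V x)) = 0)
    :
    (∫ ω, (B ω - ∫ x, B x ∂μ) * Y ω ∂μ)
      = (∫ ω, A ω * (B ω - ∫ x, B x ∂μ) ∂μ) * (∫ ω, ϑa (V ω) ∂μ)
        + (∫ ω, B ω * (B ω - ∫ x, B x ∂μ) ∂μ) * (∫ ω, ϑz (V ω) ∂μ)
        + (∫ ω, A ω * B ω * (B ω - ∫ x, B x ∂μ) ∂μ) * (∫ ω, ϑaz (V ω) ∂μ) :=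
  lemma5_second_identification_equation_general μ V A B hV hA hB hA01 hB01 αz αu hαzm hαum hαzb hαub
    htreat hindep Y hY ϑa ϑz ϑaz ϑu hϑam hϑzm hϑazm hϑum hϑab hϑzb hϑazb hϑub houtcome horth1 horth5
    horth6
end
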